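/- Let v : (Fin n → ℝ≥0) → ℝ be a nonnegative, weakly increasing SOS valuation. For 0 ≤ a ≤ n-1, ∑_{A ⊆ [n]\{i}, |A| = a} v(s_A, 0_B, s_i) ≥ (a · C(n-1, a) / (n-1)) · v(s), where B = ([n]\{i})\A. -/

import Mathlib

def SOS {n : ℕ} (v : (Fin n → NNReal) → ℝ) : Prop :=
  ∀ (i : Fin n) (s s' : Fin n → NNReal) (t : NNReal), s ≤ s' → s' i = s i → s i ≤ t →
    v (Function.update s' i t) - v s' ≤ v (Function.update s i t) - v s

def zeroOutside {n : ℕ} (s : Fin n → NNReal) (i : Fin n) (A : Finset (Fin n)) :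
    Fin n → NNReal :=
  fun j => if j = i ∨ j ∈ A then s j else 0

/-! For fixed `s` and `i`, the set function `f A = v (zeroOutside s i A)` on subsets of
`E = [n] \ {i}` has diminishing marginal returns: this is SOS applied to raising a coordinate
`k` from `0` to `s k`. Telescoping the marginals of the elements of a set `A` gives
`∑ k ∈ A, (f A - f (A \ {k})) ≤ f A - f ∅ ≤ f A`, i.e. `(#A - 1) f A ≤ ∑ k ∈ A, f (A \ {k})`.
Summing this over `#A = a + 1` and counting each `a`-set `#E - a` times gives
`a S_{a+1} ≤ (#E - a) S_a` for the level sums `S_a`; since `(a + 1) C(#E, a + 1) = (#E - a) C(#E, a)`,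
the bound follows by downward induction on `a`, starting from `S_{#E} = v s`. -/

open Finset

theorem Finset.sum_powersetCard_succ_sum_erase {ι M : Type*} [DecidableEq ι] [AddCommMonoid M]
    (g : Finset ι → M) (E : Finset ι) (a : ℕ) :
    ∑ A ∈ E.powersetCard (a + 1), ∑ k ∈ A, g (A.erase k) =
      (#E - a) • ∑ A ∈ E.powersetCard a, g A := by
  calc ∑ A ∈ E.powersetCard (a + 1), ∑ k ∈ A, g (A.erase k)
      = ∑ A ∈ E.powersetCard a, ∑ _k ∈ E \ A, g A := by
        rw [sum_sigma', sum_sigma']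
        apply sum_bij' (fun p _ => ⟨p.1.erase p.2, p.2⟩) (fun p _ => ⟨insert p.2 p.1, p.2⟩)
        · rintro ⟨A, k⟩ hA
          simp_all [insert_erase]
        · rintro ⟨A, k⟩ hA
          simp_all
        all_goals grind
    _ = (#E - a) • ∑ A ∈ E.powersetCard a, g A := by
        rw [smul_sum]
        refine sum_congr rfl fun A hA => ?_
        obtain ⟨hAE, hA⟩ := mem_powersetCard.1 hA
        rw [sum_const, card_sdiff_of_subset hAE, hA]

def DiminishingReturns {ι 𝕜 : Type*} [DecidableEq ι] [Sub 𝕜] [LE 𝕜] (f : Finset ι → 𝕜) : Prop :=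
  ∀ ⦃A B : Finset ι⦄ ⦃k : ι⦄, A ⊆ B → k ∉ B → f (insert k B) - f B ≤ f (insert k A) - f A

namespace DiminishingReturns

variable {ι 𝕜 : Type*} [DecidableEq ι] [Field 𝕜] [LinearOrder 𝕜] [IsStrictOrderedRing 𝕜]
  {f : Finset ι → 𝕜}

theorem sum_sub_erase_le (hf : DiminishingReturns f) (A : Finset ι) :
    ∑ k ∈ A, (f A - f (A.erase k)) ≤ f A - f ∅ := by
  induction A using Finset.induction_on with
  | empty => simp
  | @insert j A hj ih =>
    have hstep : ∀ k ∈ A, f (insert j A) - f ((insert j A).erase k) ≤ f A - f (A.erase k) := by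
      intro k hk
      have hkj : k ≠ j := ne_of_mem_of_not_mem hk hj
      have h := hf (subset_insert j (A.erase k)) (k := k) (by simp [hkj])
      rwa [insert_comm, insert_erase hk, ← erase_insert_of_ne hkj.symm] at h
    rw [sum_insert hj, erase_insert hj]
    linarith [sum_le_sum hstep]

theorem card_sub_one_mul_le_sum_erase (hf : DiminishingReturns f) (h0 : 0 ≤ f ∅)
    (A : Finset ι) : ((#A : 𝕜) - 1) * f A ≤ ∑ k ∈ A, f (A.erase k) := by
  have h := hf.sum_sub_erase_le A
  rw [sum_sub_distrib, sum_const, nsmul_eq_mul] at h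
  linarith

theorem mul_sum_powersetCard_succ_le (hf : DiminishingReturns f) (h0 : 0 ≤ f ∅)
    (E : Finset ι) (a : ℕ) :
    (a : 𝕜) * ∑ A ∈ E.powersetCard (a + 1), f A ≤
      ((#E - a : ℕ) : 𝕜) * ∑ A ∈ E.powersetCard a, f A :=
  calc (a : 𝕜) * ∑ A ∈ E.powersetCard (a + 1), f A
      = ∑ A ∈ E.powersetCard (a + 1), ((#A : 𝕜) - 1) * f A := by
        rw [mul_sum]
        refine sum_congr rfl fun A hA => ?_
        rw [(mem_powersetCard.1 hA).2]
        push_cast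
        ring
    _ ≤ ∑ A ∈ E.powersetCard (a + 1), ∑ k ∈ A, f (A.erase k) :=
        sum_le_sum fun A _ => hf.card_sub_one_mul_le_sum_erase h0 A
    _ = ((#E - a : ℕ) : 𝕜) * ∑ A ∈ E.powersetCard a, f A := by
        rw [sum_powersetCard_succ_sum_erase, nsmul_eq_mul]

theorem mul_choose_mul_le_card_mul_sum (hf : DiminishingReturns f) (h0 : 0 ≤ f ∅)
    {E : Finset ι} {a : ℕ} (ha : a ≤ #E) :
    (a * (#E).choose a : 𝕜) * f E ≤ #E * ∑ A ∈ E.powersetCard a, f A := by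
  induction ha using Nat.decreasingInduction with
  | self => simp [powersetCard_self]
  | of_succ a ha ih =>
    have hchoose : ((a + 1 : ℕ) * (#E).choose (a + 1) : 𝕜) = (#E).choose a * (#E - a : ℕ) := by
      exact_mod_cast (mul_comm _ _).trans (Nat.choose_succ_right_eq #E a)
    have hpos : (0 : 𝕜) < (#E - a : ℕ) := by exact_mod_cast Nat.sub_pos_of_lt ha
    refine le_of_mul_le_mul_right ?_ hpos
    calc (a * (#E).choose a : 𝕜) * f E * (#E - a : ℕ)
        = a * (((a + 1 : ℕ) * (#E).choose (a + 1) : 𝕜) * f E) := by rw [hchoose]; ring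
      _ ≤ a * (#E * ∑ A ∈ E.powersetCard (a + 1), f A) := by gcongr
      _ = #E * (a * ∑ A ∈ E.powersetCard (a + 1), f A) := by ring
      _ ≤ #E * ((#E - a : ℕ) * ∑ A ∈ E.powersetCard a, f A) :=
        mul_le_mul_of_nonneg_left (hf.mul_sum_powersetCard_succ_le h0 E a) (Nat.cast_nonneg _)
      _ = #E * (∑ A ∈ E.powersetCard a, f A) * (#E - a : ℕ) := by ring

theorem mul_choose_div_mul_le_sum_powersetCard (hf : DiminishingReturns f) (h0 : 0 ≤ f ∅)
    {E : Finset ι} {a : ℕ} (ha : a ≤ #E) :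
    (a : 𝕜) * (#E).choose a / #E * f E ≤ ∑ A ∈ E.powersetCard a, f A := by
  rcases a.eq_zero_or_pos with rfl | hapos
  · simpa using h0
  · have hE : (0 : 𝕜) < #E := by exact_mod_cast hapos.trans_le ha
    rw [div_mul_eq_mul_div, div_le_iff₀' hE]
    exact hf.mul_choose_mul_le_card_mul_sum h0 ha

end DiminishingReturns

section zeroOutside

variable {n : ℕ} (s : Fin n → NNReal) (i : Fin n)

theorem zeroOutside_mono : Monotone (zeroOutside s i) := by
  intro A B hAB j
  unfold zeroOutside
  split_ifs with hA hB
  · exact le_rfl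
  · exact absurd (hA.imp_right (@hAB j)) hB
  all_goals exact zero_le

theorem zeroOutside_of_notMem {A : Finset (Fin n)} {k : Fin n} (hkA : k ∉ A) (hki : k ≠ i) :
    zeroOutside s i A k = 0 := by
  simp [zeroOutside, hkA, hki]

theorem zeroOutside_insert_self (A : Finset (Fin n)) :
    zeroOutside s i (insert i A) = zeroOutside s i A := by
  funext j
  by_cases hj : j = i <;> simp [zeroOutside, hj]

theorem update_zeroOutside (A : Finset (Fin n)) (k : Fin n) :
    Function.update (zeroOutside s i A) k (s k) = zeroOutside s i (insert k A) := by
  funext j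
  by_cases hj : j = k
  · subst hj; simp [zeroOutside]
  · simp [zeroOutside, hj]

theorem zeroOutside_univ_erase : zeroOutside s i (univ.erase i) = s := by
  funext j
  by_cases hj : j = i <;> simp [zeroOutside, hj]

end zeroOutside

theorem SOS.diminishingReturns_zeroOutside {n : ℕ} {v : (Fin n → NNReal) → ℝ} (hv : SOS v)
    (s : Fin n → NNReal) (i : Fin n) : DiminishingReturns fun A => v (zeroOutside s i A) := by
  intro A B k hAB hkB
  by_cases hki : k = i
  · subst hki
    simp only [zeroOutside_insert_self, sub_self, le_refl]
  · have hkA : k ∉ A := fun hk => hkB (hAB hk)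
    have h := hv k (zeroOutside s i A) (zeroOutside s i B) (s k) (zeroOutside_mono s i hAB)
      (by rw [zeroOutside_of_notMem s i hkA hki, zeroOutside_of_notMem s i hkB hki])
      (by rw [zeroOutside_of_notMem s i hkA hki]; exact zero_le)
    simpa only [update_zeroOutside] using h

theorem stmt_7_general {n : ℕ} (v : (Fin n → NNReal) → ℝ)
    (hnonneg : ∀ s, 0 ≤ v s) (hsos : SOS v)
    (s : Fin n → NNReal) (i : Fin n) (a : ℕ) (ha : a ≤ n - 1) :
    ∑ A ∈ (Finset.univ.erase i).powersetCard a, v (zeroOutside s i A) ≥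
      (a : ℝ) * (Nat.choose (n - 1) a : ℝ) / ((n : ℝ) - 1) * v s := by
  have hcard : #(univ.erase i) = n - 1 := by simp
  have h := (hsos.diminishingReturns_zeroOutside s i).mul_choose_div_mul_le_sum_powersetCard
    (hnonneg _) (hcard.symm ▸ ha)
  rwa [zeroOutside_univ_erase, hcard, Nat.cast_pred i.pos] at h

theorem stmt_7 {n : ℕ} (v : (Fin n → NNReal) → ℝ)
    (hnonneg : ∀ s, 0 ≤ v s) (hmono : Monotone v) (hsos : SOS v)
    (s : Fin n → NNReal) (i : Fin n) (a : ℕ) (ha : a ≤ n - 1) :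
    ∑ A ∈ (Finset.univ.erase i).powersetCard a, v (zeroOutside s i A) ≥
      (a : ℝ) * (Nat.choose (n - 1) a : ℝ) / ((n : ℝ) - 1) * v s :=
  stmt_7_general v hnonneg hsos s i a ha
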